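/- For any real m×p matrix A, the inverse of the principal square root of I_p + AᵀA equals I_p − Aᵀ [ (I_m + AAᵀ)^{1/2} ( I_m + (I_m + AAᵀ)^{1/2} ) ]⁻¹ A. -/

import Mathlib

open Matrix

section

open scoped ComplexOrder

/-- The positive semidefinite square root of a positive semidefinite matrix
(the definition `Matrix.PosSemidef.sqrt` of the older Mathlib, since removed). -/
noncomputable def Matrix.PosSemidef.sqrt {n 𝕜 : Type*} [Fintype n] [DecidableEq n] [RCLike 𝕜]
    {A : Matrix n n 𝕜} (hA : A.PosSemidef) : Matrix n n 𝕜 :=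
  hA.1.eigenvectorUnitary.1 * diagonal ((↑) ∘ (√·) ∘ hA.1.eigenvalues) *
  (star hA.1.eigenvectorUnitary : Matrix n n 𝕜)

end

/-!
Write `B = √(1 + AᵀA)` and `C = √(1 + AAᵀ)`. They intertwine, `A B = C A`: the difference
`X = A B - C A` solves the Sylvester equation `C X + X B = 0`, which forces `X = 0` since `C` is
positive definite and `B` positive semidefinite. Hence `(1 + C)⁻¹ A = A (1 + B)⁻¹`, and
`B (1 - Aᵀ (C (1 + C))⁻¹ A) = B - Aᵀ (1 + C)⁻¹ A = B - (B² - 1)(1 + B)⁻¹ = 1`.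
-/

open scoped MatrixOrder ComplexOrder

namespace Matrix

variable {m n 𝕜 : Type*} [Fintype m] [Fintype n] [DecidableEq n] [RCLike 𝕜]

theorem PosSemidef.sqrt_eq_cfcSqrt {A : Matrix n n 𝕜} (hA : A.PosSemidef) :
    hA.sqrt = CFC.sqrt A := by
  rw [CFC.sqrt_eq_cfc, cfc_nnreal_eq_real _ A, hA.1.cfc_eq]
  simp [IsHermitian.cfc, PosSemidef.sqrt, Function.comp_def, hA.eigenvalues_nonneg]

theorem PosDef.eq_zero_of_mul_add_mul_eq_zero {C : Matrix n n 𝕜} {B : Matrix m m 𝕜}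
    {X : Matrix n m 𝕜} (hC : C.PosDef) (hB : B.PosSemidef) (h : C * X + X * B = 0) : X = 0 := by
  obtain ⟨S, hS⟩ := CStarAlgebra.nonneg_iff_eq_star_mul_self.mp hC.posSemidef.nonneg
  have htrace : ((S * X)ᴴ * (S * X)).trace = -(X * B * Xᴴ).trace := by
    calc ((S * X)ᴴ * (S * X)).trace = (Xᴴ * (C * X)).trace := by
          rw [hS, conjTranspose_mul, star_eq_conjTranspose]; simp only [Matrix.mul_assoc]
      _ = -(Xᴴ * (X * B)).trace := by rw [eq_neg_of_add_eq_zero_left h, Matrix.mul_neg, trace_neg]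
      _ = -(X * B * Xᴴ).trace := by rw [trace_mul_comm, Matrix.mul_assoc]
  have hSX : S * X = 0 := by
    refine trace_conjTranspose_mul_self_eq_zero_iff.mp (le_antisymm ?_ ?_)
    · exact htrace ▸ neg_nonpos.mpr (hB.mul_mul_conjTranspose_same X).trace_nonneg
    · exact (posSemidef_conjTranspose_mul_self _).trace_nonneg
  have hCX : C * X = 0 := by rw [hS, Matrix.mul_assoc, hSX, Matrix.mul_zero]
  simpa [nonsing_inv_mul_cancel_left _ _ ((isUnit_iff_isUnit_det C).mp hC.isUnit)] using
    congrArg (C⁻¹ * ·) hCX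

theorem mul_cfcSqrt_eq_cfcSqrt_mul [DecidableEq m] {P : Matrix m m 𝕜} {Q : Matrix n n 𝕜}
    (A : Matrix n m 𝕜) (hP : P.PosSemidef) (hQ : Q.PosDef) (h : A * P = Q * A) :
    A * CFC.sqrt P = CFC.sqrt Q * A := by
  rw [← sub_eq_zero]
  refine (IsStrictlyPositive.sqrt Q hQ.isStrictlyPositive).posDef.eq_zero_of_mul_add_mul_eq_zero
    (CFC.sqrt_nonneg P).posSemidef ?_
  calc CFC.sqrt Q * (A * CFC.sqrt P - CFC.sqrt Q * A)
        + (A * CFC.sqrt P - CFC.sqrt Q * A) * CFC.sqrt P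
      = A * (CFC.sqrt P * CFC.sqrt P) - CFC.sqrt Q * CFC.sqrt Q * A := by
        simp only [Matrix.mul_sub, Matrix.sub_mul, Matrix.mul_assoc]; abel
    _ = 0 := by
        rw [CFC.sqrt_mul_sqrt_self P hP.nonneg, CFC.sqrt_mul_sqrt_self Q hQ.posSemidef.nonneg, h,
          sub_self]

section CommRing

variable {m n R : Type*} [Fintype m] [Fintype n] [DecidableEq m] [DecidableEq n] [CommRing R]

theorem inv_mul_eq_mul_inv_of_mul_eq_mul {X : Matrix m m R} {Y : Matrix n n R} {A : Matrix n m R}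
    (hX : IsUnit X.det) (hY : IsUnit Y.det) (h : A * X = Y * A) : Y⁻¹ * A = A * X⁻¹ := by
  calc Y⁻¹ * A = Y⁻¹ * (A * X * X⁻¹) := by rw [mul_nonsing_inv_cancel_right _ _ hX]
    _ = A * X⁻¹ := by rw [h, Matrix.mul_assoc, nonsing_inv_mul_cancel_left _ _ hY]

theorem mul_one_sub_mul_inv_mul_eq_one {B : Matrix m m R} {C : Matrix n n R} {A : Matrix n m R}
    {A' : Matrix m n R} (hB : B * B = 1 + A' * A) (hAB : A * B = C * A) (hBA' : B * A' = A' * C)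
    (hC : IsUnit C.det) (hB₁ : IsUnit (1 + B).det) (hC₁ : IsUnit (1 + C).det) :
    B * (1 - A' * (C * (1 + C))⁻¹ * A) = 1 := by
  have hCinv : C * (C * (1 + C))⁻¹ = (1 + C)⁻¹ := by
    rw [show C * (1 + C) = (1 + C) * C by noncomm_ring, mul_inv_rev,
      mul_nonsing_inv_cancel_left _ _ hC]
  have hA : (1 + C)⁻¹ * A = A * (1 + B)⁻¹ :=
    inv_mul_eq_mul_inv_of_mul_eq_mul hB₁ hC₁ (by simp only [Matrix.mul_add, Matrix.add_mul,
      Matrix.mul_one, Matrix.one_mul, hAB])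
  have hA'A : A' * A = (B - 1) * (1 + B) := by
    rw [Matrix.sub_mul, Matrix.mul_add, Matrix.mul_add, hB]; noncomm_ring
  calc B * (1 - A' * (C * (1 + C))⁻¹ * A)
      = B - A' * (C * (C * (1 + C))⁻¹) * A := by
        simp only [Matrix.mul_sub, Matrix.mul_one, ← Matrix.mul_assoc, hBA']
    _ = B - (B - 1) * (1 + B) * (1 + B)⁻¹ := by
        rw [hCinv, Matrix.mul_assoc, hA, ← Matrix.mul_assoc, hA'A]
    _ = 1 := by rw [mul_nonsing_inv_cancel_right _ _ hB₁, sub_sub_cancel]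

end CommRing

end Matrix

/-- Woodbury-like identity for the inverse matrix square root: for any real `m × p` matrix `A`,
the inverse of the principal square root of `I_p + AᵀA` equals
`I_p − Aᵀ [ (I_m + AAᵀ)^{1/2} ( I_m + (I_m + AAᵀ)^{1/2} ) ]⁻¹ A`. -/
theorem inv_sqrt_one_add_transpose_mul (m p : ℕ) (A : Matrix (Fin m) (Fin p) ℝ)
    (h1 : (1 + Aᵀ * A).PosSemidef) (h2 : (1 + A * Aᵀ).PosSemidef) :
    h1.sqrt⁻¹ = 1 - Aᵀ * (h2.sqrt * (1 + h2.sqrt))⁻¹ * A := by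
  have hP : (1 + Aᵀ * A).PosDef := by
    simpa using PosDef.one.add_posSemidef (posSemidef_conjTranspose_mul_self A)
  have hQ : (1 + A * Aᵀ).PosDef := by
    simpa using PosDef.one.add_posSemidef (posSemidef_self_mul_conjTranspose A)
  have hdet {k : ℕ} {M : Matrix (Fin k) (Fin k) ℝ} (hM : M.PosDef) : IsUnit M.det :=
    (isUnit_iff_isUnit_det M).mp hM.isUnit
  have hOneAddSqrt {k : ℕ} (M : Matrix (Fin k) (Fin k) ℝ) : (1 + CFC.sqrt M).PosDef :=
    PosDef.one.add_posSemidef (CFC.sqrt_nonneg M).posSemidef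
  rw [h1.sqrt_eq_cfcSqrt, h2.sqrt_eq_cfcSqrt]
  refine inv_eq_right_inv (mul_one_sub_mul_inv_mul_eq_one (CFC.sqrt_mul_sqrt_self _ h1.nonneg)
    (mul_cfcSqrt_eq_cfcSqrt_mul A h1 hQ ?_) (mul_cfcSqrt_eq_cfcSqrt_mul Aᵀ h2 hP ?_).symm
    (hdet (IsStrictlyPositive.sqrt _ hQ.isStrictlyPositive).posDef) (hdet (hOneAddSqrt _))
    (hdet (hOneAddSqrt _)))
  all_goals
    simp only [Matrix.mul_add, Matrix.add_mul, Matrix.mul_one, Matrix.one_mul, Matrix.mul_assoc]
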